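/- arXiv:math/0405151 — 3 statements merged into one kernel-verified Lean document; each statement's English description precedes it below -/
import Mathlib

section
/- Let r be a prime and let 𝓡 be the subring of ℤ[v^{±1}, z^{±1}] generated by v, v⁻¹, z and (v⁻¹ − v)z⁻¹. Suppose w ∈ 𝓡 is written as w = Σ_i u_i(v) z^i with u_i(v) ∈ ℤ[v^{±1}]. Then w lies in the ideal (r, z^r) of 𝓡 generated by r and z^r if and only if for every i ≤ r the coefficient u_i(v) lies in the ideal of ℤ[v^{±1}] generated by r and (v⁻¹ − v)^{r−i}. -/
open LaurentPolynomial

/-- The Laurent polynomial ring `ℤ[v^{±1}, z^{±1}]`, with `z` the outer variable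
and `v` the inner variable. -/
abbrev LL : Type := LaurentPolynomial (LaurentPolynomial ℤ)

/-- The variable `v`. -/
noncomputable def vV : LL := C (T 1)

/-- The variable `v⁻¹`. -/
noncomputable def vVinv : LL := C (T (-1))

/-- The variable `z`. -/
noncomputable def zZ : LL := T 1

/-- The variable `z⁻¹`. -/
noncomputable def zZinv : LL := T (-1)

/-- The subring `𝓡` of `ℤ[v^{±1}, z^{±1}]` generated by `v`, `v⁻¹`, `z` and
`(v⁻¹ − v)z⁻¹`. -/
noncomputable def Rcal : Subring LL :=
  Subring.closure {vV, vVinv, zZ, (vVinv - vV) * zZinv}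

lemma zZ_pow_mem (r : ℕ) : zZ ^ r ∈ Rcal :=
  pow_mem (Subring.subset_closure (by simp)) r


/-!
`𝓡` is `ℤ[v^{±1}][z, (v⁻¹ - v) z⁻¹]`: the Laurent polynomials whose `z^i`-coefficient is divisible
by `(v⁻¹ - v)^{max(0, -i)}`. Reading `w = r m + z^r n` coefficientwise gives
`u_i = r m_i + n_{i-r}` with `(v⁻¹ - v)^{r-i} ∣ n_{i-r}`. Conversely, a decomposition
`u_i = r a + (v⁻¹ - v)^{r-i} b` lifts to `u_i z^i = r (a z^i) + z^r (b (v⁻¹ - v)^{r-i} z^{i-r})`;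
for `i < 0` the term `a z^i` lies in `𝓡` because `r` is prime in `ℤ[v^{±1}]` and does not divide
`v⁻¹ - v`, so `(v⁻¹ - v)^{-i} ∣ u_i - (v⁻¹ - v)^{r-i} b = r a` forces `(v⁻¹ - v)^{-i} ∣ a`.
-/

namespace LaurentPolynomial

variable {R : Type*}

section Semiring

variable [Semiring R]

lemma coeff_mul_T (f : R[T;T⁻¹]) (n i : ℤ) : (f * T n).coeff i = f.coeff (i - n) := by
  rw [T, AddMonoidAlgebra.coeff_mul_single_apply, mul_one, sub_eq_add_neg]

lemma coeff_mul_C (f : R[T;T⁻¹]) (a : R) (i : ℤ) : (f * C a).coeff i = f.coeff i * a := by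
  rw [← single_eq_C, AddMonoidAlgebra.coeff_mul_single_apply, neg_zero, add_zero]

lemma coeff_C_mul_T (a : R) (n i : ℤ) : (C a * T n).coeff i = if n = i then a else 0 := by
  rw [← single_eq_C_mul_T, AddMonoidAlgebra.coeff_single, Finsupp.single_apply]

lemma coeff_sum_C_mul_T {s : Finset ℤ} {u : ℤ → R} (hu : ∀ i ∉ s, u i = 0) (j : ℤ) :
    (∑ i ∈ s, C (u i) * T i).coeff j = u j := by
  simp only [AddMonoidAlgebra.coeff_sum, Finsupp.finsetSum_apply, coeff_C_mul_T,
    Finset.sum_ite_eq', ite_eq_left_iff]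
  exact fun hj => (hu j hj).symm

lemma eq_sum_C_mul_T (f : R[T;T⁻¹]) : f = ∑ i ∈ f.coeff.support, C (f.coeff i) * T i :=
  AddMonoidAlgebra.ext <| Finsupp.ext <| fun j =>
    (coeff_sum_C_mul_T (fun _ => Finsupp.notMem_support_iff.1) j).symm

end Semiring

section CommRing

variable [CommRing R]

/-- The subring `R[T, a T⁻¹]` of `R[T;T⁻¹]`. -/
def coeffDvdSubring (a : R) : Subring R[T;T⁻¹] where
  carrier := {f | ∀ i, a ^ (-i).toNat ∣ f.coeff i}
  mul_mem' {f g} hf hg i := by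
    classical
    rw [AddMonoidAlgebra.coeff_mul]
    refine Finset.dvd_sum fun m _ => Finset.dvd_sum fun n _ => ?_
    dsimp only
    split_ifs with hmn
    · rw [← hmn]
      exact (pow_dvd_pow a (by omega)).trans (pow_add a _ _ ▸ mul_dvd_mul (hf m) (hg n))
    · exact dvd_zero _
  one_mem' i := by
    rw [← T_zero, T_apply]
    split_ifs with h
    · simp [← h]
    · exact dvd_zero _
  add_mem' hf hg i := dvd_add (hf i) (hg i)
  zero_mem' _ := dvd_zero _
  neg_mem' hf i := dvd_neg.2 (hf i)

lemma mem_coeffDvdSubring {a : R} {f : R[T;T⁻¹]} :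
    f ∈ coeffDvdSubring a ↔ ∀ i, a ^ (-i).toNat ∣ f.coeff i :=
  Iff.rfl

lemma C_mul_T_mem_coeffDvdSubring_iff {a p : R} {n : ℤ} :
    C p * T n ∈ coeffDvdSubring a ↔ a ^ (-n).toNat ∣ p := by
  simp only [mem_coeffDvdSubring, coeff_C_mul_T]
  refine ⟨fun h => by simpa using h n, fun h i => ?_⟩
  split_ifs with hn
  · exact hn ▸ h
  · exact dvd_zero _

theorem prime_C {p : R} (hp : Prime p) : Prime (C p : R[T;T⁻¹]) := by
  have hpX : Prime (Polynomial.C p) := Polynomial.prime_C_iff.2 hp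
  have hdisj : Disjoint (Submonoid.powers (Polynomial.X : Polynomial R) : Set (Polynomial R))
      (Ideal.span {Polynomial.C p}) := by
    refine Set.disjoint_left.2 ?_
    rintro _ ⟨n, rfl⟩ hn
    have hX := hpX.dvd_of_dvd_pow (Ideal.mem_span_singleton.1 hn)
    exact hp.not_isUnit (isUnit_of_dvd_one (by
      simpa using (Polynomial.C_dvd_iff_dvd_coeff _ _).1 hX 1))
  have hI := IsLocalization.isPrime_of_isPrime_disjoint (Submonoid.powers Polynomial.X) R[T;T⁻¹]
    _ ((Ideal.span_singleton_prime hpX.ne_zero).2 hpX) hdisj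
  rw [Ideal.map_span, Set.image_singleton, algebraMap_eq_toLaurent, Polynomial.toLaurent_C] at hI
  refine (Ideal.span_singleton_prime fun h => hp.ne_zero ?_).1 hI
  simpa using congrArg (·.coeff 0) h

end CommRing

end LaurentPolynomial

theorem Prime.dvd_of_dvd_mul_left_of_not_dvd {α : Type*} [CommMonoidWithZero α]
    [IsCancelMulZero α] {p x a : α} (hp : Prime p) (hx : ¬p ∣ x) (h : x ∣ p * a) : x ∣ a := by
  obtain ⟨c, hc⟩ := h
  obtain ⟨d, rfl⟩ := (hp.dvd_or_dvd (hc ▸ dvd_mul_right p a)).resolve_left hx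
  exact ⟨d, mul_left_cancel₀ hp.ne_zero (by rw [hc, mul_left_comm])⟩

noncomputable def vInvSubV : LaurentPolynomial ℤ := T (-1) - T 1

lemma vVinv_sub_vV_mul_zZinv : (vVinv - vV) * zZinv = (C vInvSubV * T (-1) : LL) := by
  simp [vVinv, vV, zZinv, vInvSubV, map_sub]

lemma C_mem_Rcal (p : LaurentPolynomial ℤ) : (C p : LL) ∈ Rcal := by
  have hv : vV ∈ Rcal := Subring.subset_closure (by simp)
  have hvinv : vVinv ∈ Rcal := Subring.subset_closure (by simp)
  induction p using LaurentPolynomial.induction_on with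
  | h_C a =>
    rw [← RingHom.comp_apply, eq_intCast]
    exact intCast_mem Rcal a
  | h_add hp hq => rw [map_add]; exact add_mem hp hq
  | h_C_mul_T n a h =>
    rw [T_add, ← mul_assoc, map_mul]
    exact mul_mem h hv
  | h_C_mul_T_Z n a h =>
    rw [T_sub, ← mul_assoc, map_mul]
    exact mul_mem h hvinv

lemma C_mul_T_mem_Rcal {p : LaurentPolynomial ℤ} {n : ℤ} (h : vInvSubV ^ (-n).toNat ∣ p) :
    (C p * T n : LL) ∈ Rcal := by
  rcases le_or_gt 0 n with hn | hn
  · lift n to ℕ using hn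
    rw [← mul_one (n : ℤ), ← T_pow]
    exact mul_mem (C_mem_Rcal p) (zZ_pow_mem n)
  · obtain ⟨q, rfl⟩ := h
    have hgen : (C vInvSubV * T (-1) : LL) ∈ Rcal := by
      rw [← vVinv_sub_vV_mul_zZinv]
      exact Subring.subset_closure (by simp)
    have hpow : (C (vInvSubV ^ (-n).toNat * q) * T n : LL) =
        C q * (C vInvSubV * T (-1)) ^ (-n).toNat := by
      rw [mul_pow, T_pow, map_mul, map_pow, show ((-n).toNat : ℤ) * -1 = n by omega]
      ring
    rw [hpow]
    exact mul_mem (C_mem_Rcal q) (pow_mem hgen _)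

theorem Rcal_eq_coeffDvdSubring : Rcal = coeffDvdSubring vInvSubV := by
  apply le_antisymm
  · refine Subring.closure_le.2 ?_
    simp only [Set.insert_subset_iff, Set.singleton_subset_iff, SetLike.mem_coe]
    refine ⟨?_, ?_, ?_, ?_⟩
    · simpa [vV] using
        (C_mul_T_mem_coeffDvdSubring_iff (a := vInvSubV) (p := T 1) (n := 0)).2 (one_dvd _)
    · simpa [vVinv] using
        (C_mul_T_mem_coeffDvdSubring_iff (a := vInvSubV) (p := T (-1)) (n := 0)).2 (one_dvd _)
    · simpa [zZ] using
        (C_mul_T_mem_coeffDvdSubring_iff (a := vInvSubV) (p := 1) (n := 1)).2 (one_dvd _)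
    · rw [vVinv_sub_vV_mul_zZinv, C_mul_T_mem_coeffDvdSubring_iff]
      simp
  · intro f hf
    rw [eq_sum_C_mul_T f]
    exact sum_mem fun i _ => C_mul_T_mem_Rcal (hf i)

lemma mem_Rcal_iff {f : LL} : f ∈ Rcal ↔ ∀ i, vInvSubV ^ (-i).toNat ∣ f.coeff i := by
  rw [Rcal_eq_coeffDvdSubring, mem_coeffDvdSubring]

lemma zZ_pow_eq (n : ℕ) : zZ ^ n = (T n : LL) := by
  rw [zZ, T_pow, mul_one]

lemma natCast_not_dvd_vInvSubV {r : ℕ} (hr : r.Prime) :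
    ¬(r : LaurentPolynomial ℤ) ∣ vInvSubV := by
  rintro ⟨q, hq⟩
  rw [← map_natCast C, ← smul_eq_C_mul] at hq
  have h1 : (-1 : ℤ) = (r : ℤ) • q.coeff 1 := by
    rw [← AddMonoidAlgebra.coeff_smul_apply, ← hq]
    simp [vInvSubV]
  exact hr.not_dvd_one (Int.natCast_dvd.1 ⟨_, h1⟩)

lemma vInvSubV_pow_dvd_of_dvd_natCast_mul {r : ℕ} (hr : r.Prime) {k : ℕ}
    {a : LaurentPolynomial ℤ} (h : vInvSubV ^ k ∣ r * a) : vInvSubV ^ k ∣ a := by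
  have hprime : Prime (r : LaurentPolynomial ℤ) :=
    map_natCast (C : ℤ →+* _) r ▸ prime_C (Nat.prime_iff_prime_int.1 hr)
  exact hprime.dvd_of_dvd_mul_left_of_not_dvd
    (fun hk => natCast_not_dvd_vInvSubV hr (hprime.dvd_of_dvd_pow hk)) h

lemma coeff_mem_span_of_mem_span {r : ℕ} {f : Rcal}
    (hf : f ∈ Ideal.span {(r : Rcal), ⟨zZ ^ r, zZ_pow_mem r⟩}) (i : ℤ) :
    (f : LL).coeff i ∈ Ideal.span {(r : LaurentPolynomial ℤ), vInvSubV ^ ((r : ℤ) - i).toNat} := by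
  obtain ⟨m, n, rfl⟩ := Ideal.mem_span_pair.1 hf
  obtain ⟨c, hc⟩ : vInvSubV ^ ((r : ℤ) - i).toNat ∣ (n : LL).coeff (i - r) := by
    simpa [show (-(i - r)).toNat = ((r : ℤ) - i).toNat by omega] using mem_Rcal_iff.1 n.2 (i - r)
  refine Ideal.mem_span_pair.2 ⟨(m : LL).coeff i, c, ?_⟩
  push_cast
  rw [zZ_pow_eq, ← map_natCast (C : LaurentPolynomial ℤ →+* LL), AddMonoidAlgebra.coeff_add,
    Finsupp.add_apply, coeff_mul_C, coeff_mul_T, hc, mul_comm c]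

lemma C_mul_T_mem_span {r : ℕ} (hr : r.Prime) {p : LaurentPolynomial ℤ} {i : ℤ}
    (hp : vInvSubV ^ (-i).toNat ∣ p)
    (hspan : i ≤ r → p ∈ Ideal.span {(r : LaurentPolynomial ℤ), vInvSubV ^ ((r : ℤ) - i).toNat}) :
    (⟨C p * T i, C_mul_T_mem_Rcal hp⟩ : Rcal) ∈
      Ideal.span {(r : Rcal), ⟨zZ ^ r, zZ_pow_mem r⟩} := by
  have hT : (T i : LL) = T (i - r) * T r := by rw [← T_add, sub_add_cancel]
  rw [Ideal.mem_span_pair]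
  rcases le_or_gt i r with hi | hi
  · obtain ⟨a, b, rfl⟩ := Ideal.mem_span_pair.1 (hspan hi)
    have ha : vInvSubV ^ (-i).toNat ∣ a := by
      refine vInvSubV_pow_dvd_of_dvd_natCast_mul hr ?_
      rw [show (r : LaurentPolynomial ℤ) * a =
        a * r + b * vInvSubV ^ ((r : ℤ) - i).toNat - b * vInvSubV ^ ((r : ℤ) - i).toNat by ring]
      exact dvd_sub hp ((pow_dvd_pow _ (by omega)).mul_left b)
    have hb : vInvSubV ^ (-(i - r)).toNat ∣ b * vInvSubV ^ ((r : ℤ) - i).toNat := by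
      rw [show (-(i - r)).toNat = ((r : ℤ) - i).toNat by omega]
      exact dvd_mul_left _ _
    refine ⟨⟨C a * T i, C_mul_T_mem_Rcal ha⟩, ⟨_, C_mul_T_mem_Rcal hb⟩, Subtype.ext ?_⟩
    push_cast
    rw [zZ_pow_eq, ← map_natCast (C : LaurentPolynomial ℤ →+* LL), hT]
    simp only [map_add, map_mul]
    ring
  · have hp' : vInvSubV ^ (-(i - r)).toNat ∣ p := by
      rw [show (-(i - r)).toNat = 0 by omega, pow_zero]
      exact one_dvd p
    refine ⟨0, ⟨_, C_mul_T_mem_Rcal hp'⟩, Subtype.ext ?_⟩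
    push_cast
    rw [zZ_pow_eq, hT]
    ring

theorem stmt_3 (r : ℕ) (hr : r.Prime) (w : Rcal)
    (u : ℤ → LaurentPolynomial ℤ) (s : Finset ℤ)
    (hw : (w : LL) = ∑ i ∈ s, C (u i) * T i)
    (hu : ∀ i ∉ s, u i = 0) :
    w ∈ Ideal.span ({(r : Rcal), ⟨zZ ^ r, zZ_pow_mem r⟩} : Set Rcal) ↔
      ∀ i : ℤ, i ≤ (r : ℤ) →
        u i ∈ Ideal.span ({(r : LaurentPolynomial ℤ),
          (T (-1) - T 1) ^ ((r : ℤ) - i).toNat} : Set (LaurentPolynomial ℤ)) := by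
  have hcoeff (i : ℤ) : (w : LL).coeff i = u i := hw ▸ coeff_sum_C_mul_T hu i
  have hdvd (i : ℤ) : vInvSubV ^ (-i).toNat ∣ u i := hcoeff i ▸ mem_Rcal_iff.1 w.2 i
  refine ⟨fun hmem i _ => hcoeff i ▸ coeff_mem_span_of_mem_span hmem i, fun hspan => ?_⟩
  have hw_sum : w = ∑ i ∈ s, ⟨C (u i) * T i, C_mul_T_mem_Rcal (hdvd i)⟩ :=
    Subtype.ext (by push_cast; exact hw)
  rw [hw_sum]
  exact Ideal.sum_mem _ fun i _ => C_mul_T_mem_span hr (hdvd i) (hspan i)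
end

section
/- Let V(t) = t² − 3t³ + 7t⁴ − 10t⁵ + 14t⁶ − 14t⁷ + 13t⁸ − 11t⁹ + 7t¹⁰ − 4t¹¹ + t¹² in the Laurent polynomial ring ℤ[t^{±1}]. Then for every prime r ≥ 5, the element V(t) − V(t⁻¹) does not lie in the ideal of ℤ[t^{±1}] generated by r and t^r − 1 (so the knot 10_{101}, whose Jones polynomial equals V, fails the periodicity congruence V(t) ≡ V(t⁻¹) mod (r, t^r − 1) for all primes r ≥ 5). -/
/-!
For a Laurent polynomial `f = ∑ aₙ Tⁿ` over a commutative ring `R`, the moment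
`μₖ(f) = ∑ aₙ nᵏ` is `R`-linear, and modulo `m` it is unchanged by multiplying with `Tᵐ`,
since `(n + m)ᵏ ≡ nᵏ`. Hence `m ∣ μₖ(f)` whenever `f ∈ (m, Tᵐ - 1)`. Moreover
`μₖ(f(T⁻¹)) = (-1)ᵏ μₖ(f)`. For `W = V - V(T⁻¹)` one computes `μ₃(W) = -1224` and
`μ₅(W) = -140280`, whose gcd is `24 = 2³ · 3`, so no prime `r ≥ 5` divides both.
-/

open LaurentPolynomial

/-- The Jones polynomial of the knot `10_{101}` in `ℤ[t^{±1}]`. -/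
noncomputable def V10101 : LaurentPolynomial ℤ :=
  T 2 - 3 * T 3 + 7 * T 4 - 10 * T 5 + 14 * T 6 - 14 * T 7 + 13 * T 8
    - 11 * T 9 + 7 * T 10 - 4 * T 11 + T 12

namespace LaurentPolynomial

variable {R : Type*} [CommRing R]

noncomputable def moment (k : ℕ) : R[T;T⁻¹] →ₗ[R] R :=
  (AddMonoidAlgebra.basis ℤ R).constr R fun n => (n : R) ^ k

theorem moment_T (k : ℕ) (n : ℤ) : moment k (T n : R[T;T⁻¹]) = (n : R) ^ k :=
  (AddMonoidAlgebra.basis ℤ R).constr_basis R _ n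

theorem moment_C_mul_T (k : ℕ) (a : R) (n : ℤ) : moment k (C a * T n) = a * (n : R) ^ k := by
  rw [← smul_eq_C_mul, map_smul, moment_T, smul_eq_mul]

theorem moment_invert (k : ℕ) (f : R[T;T⁻¹]) : moment k (invert f) = (-1) ^ k * moment k f := by
  induction f using LaurentPolynomial.induction_on' with
  | add p q hp hq => rw [map_add, map_add, hp, hq, map_add, mul_add]
  | C_mul_T n a =>
    rw [map_mul, invert_C, invert_T, moment_C_mul_T, moment_C_mul_T, Int.cast_neg, neg_pow]
    ring

theorem dvd_moment_mul_T_sub_one (k m : ℕ) (f : R[T;T⁻¹]) :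
    (m : R) ∣ moment k (f * (T m - 1)) := by
  induction f using LaurentPolynomial.induction_on' with
  | add p q hp hq => rw [add_mul, map_add]; exact dvd_add hp hq
  | C_mul_T n a =>
    rw [mul_sub, mul_one, mul_assoc, ← T_add, map_sub, moment_C_mul_T, moment_C_mul_T, ← mul_sub]
    refine dvd_mul_of_dvd_right ?_ a
    simpa using sub_dvd_pow_sub_pow ((n + m : ℤ) : R) (n : R) k

theorem dvd_moment_of_mem_span (k m : ℕ) {f : R[T;T⁻¹]}
    (hf : f ∈ Ideal.span {(m : R[T;T⁻¹]), T m - 1}) : (m : R) ∣ moment k f := by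
  obtain ⟨a, b, rfl⟩ := Ideal.mem_span_pair.mp hf
  rw [map_add, ← nsmul_eq_mul', map_nsmul, nsmul_eq_mul]
  exact dvd_add (dvd_mul_right _ _) (dvd_moment_mul_T_sub_one k m b)

end LaurentPolynomial

theorem moment_three_V10101_sub_invert : moment 3 (V10101 - invert V10101) = -1224 := by
  rw [map_sub, moment_invert]
  simp only [V10101, map_add, map_sub, ← Nat.ofNat_nsmul_eq_mul, map_nsmul, moment_T]
  norm_num

theorem moment_five_V10101_sub_invert : moment 5 (V10101 - invert V10101) = -140280 := by
  rw [map_sub, moment_invert]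
  simp only [V10101, map_add, map_sub, ← Nat.ofNat_nsmul_eq_mul, map_nsmul, moment_T]
  norm_num

theorem stmt_5 (r : ℕ) (hr : r.Prime) (hr5 : 5 ≤ r) :
    V10101 - invert V10101 ∉
      Ideal.span ({(r : LaurentPolynomial ℤ), T (r : ℤ) - 1} :
        Set (LaurentPolynomial ℤ)) := by
  intro hmem
  have hμ₃ := moment_three_V10101_sub_invert ▸ dvd_moment_of_mem_span 3 r hmem
  have hμ₅ := moment_five_V10101_sub_invert ▸ dvd_moment_of_mem_span 5 r hmem
  have h24 : r ∣ 2 ^ 3 * 3 := by exact_mod_cast Int.dvd_gcd hμ₃ hμ₅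
  rcases hr.dvd_mul.mp h24 with h8 | h3
  · have := Nat.le_of_dvd two_pos (hr.dvd_of_dvd_pow h8); omega
  · have := Nat.le_of_dvd three_pos h3; omega
end

section
/- Let n₁, n₂, n₃ be odd integers and φ₁, φ₂, φ₃ ∈ ℝ, and define the Lissajous map K : ℝ → ℝ³ by K(t) = (cos(n₁ t + φ₁), cos(n₂ t + φ₂), cos(n₃ t + φ₃)). Then K(t + π) = −K(t) for all t ∈ ℝ; in particular the image of K (an odd Lissajous knot) is invariant under the point reflection (x,y,z) ↦ (−x,−y,−z) of ℝ³, the symmetry making an odd Lissajous knot strongly plus amphicheiral. -/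
lemma aux_cos_odd (n : ℤ) (hn : Odd n) (φ t : ℝ) :
    Real.cos (n * (t + Real.pi) + φ) = -Real.cos (n * t + φ) := by
  obtain ⟨k, hk⟩ := hn
  have : (n : ℝ) * (t + Real.pi) + φ = (n * t + φ + Real.pi) + k * (2 * Real.pi) := by
    have : (n : ℝ) = 2 * k + 1 := by push_cast [hk]; ring
    rw [this]; ring
  rw [this, Real.cos_add_int_mul_two_pi, Real.cos_add_pi]

theorem stmt_13 (n₁ n₂ n₃ : ℤ) (hn₁ : Odd n₁) (hn₂ : Odd n₂) (hn₃ : Odd n₃)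
    (φ₁ φ₂ φ₃ : ℝ)
    (K : ℝ → ℝ × ℝ × ℝ)
    (hK : ∀ t : ℝ, K t =
      (Real.cos (n₁ * t + φ₁), Real.cos (n₂ * t + φ₂), Real.cos (n₃ * t + φ₃))) :
    (∀ t : ℝ, K (t + Real.pi) = -K t) ∧
    (fun p : ℝ × ℝ × ℝ => -p) '' Set.range K = Set.range K := by
  have key : ∀ t : ℝ, K (t + Real.pi) = -K t := by
    intro t
    rw [hK, hK, aux_cos_odd n₁ hn₁, aux_cos_odd n₂ hn₂, aux_cos_odd n₃ hn₃]
    rfl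
  refine ⟨key, ?_⟩
  ext p
  constructor
  · rintro ⟨q, ⟨t, rfl⟩, rfl⟩
    exact ⟨t + Real.pi, (key t).symm ▸ rfl⟩
  · rintro ⟨t, rfl⟩
    exact ⟨K (t + Real.pi), ⟨t + Real.pi, rfl⟩, by rw [key t]; simp⟩
end
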